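/- arXiv:2301.02801 — 5 statements merged into one kernel-verified Lean document; each statement's English description precedes it below -/
import Mathlib

section
/- Let p ≥ 3 be a prime number. Let c be the permutation of ZMod p given by c(i) = i + 1, and let the cyclic group generated by c act on the group of all permutations of ZMod p by conjugation, σ ↦ c^k ∘ σ ∘ c^{-k}. Then the number of orbits of this action equals (p - 1)! + p - 1. -/
/-- Sign function: `sg u = 1` if `u ≥ 0`, else `-1`. -/
def sg (u : ℤ) : ℤ := if 0 ≤ u then 1 else -1

/-- Hidden-layer map of the PBNN with weights `w = (w_a, w_b, w_c)`:
`h_w(x)_i = sg (w_a * x_{i-1} + w_b * x_i + w_c * x_{i+1})`. -/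
def hmap (N : ℕ) (w : ℤ × ℤ × ℤ) (x : ZMod N → ℤ) : ZMod N → ℤ :=
  fun i => sg (w.1 * x (i - 1) + w.2.1 * x i + w.2.2 * x (i + 1))

/-- PBNN map `f_{σ,w}(x)_i = h_w(x)_{σ(i)}`. -/
def pbnn (N : ℕ) (w : ℤ × ℤ × ℤ) (σ : Equiv.Perm (ZMod N)) (x : ZMod N → ℤ) :
    ZMod N → ℤ :=
  fun i => hmap N w x (σ i)

/-- `x` is a binary state vector, i.e. all entries lie in `B = {-1, 1}`. -/
def isB {N : ℕ} (x : ZMod N → ℤ) : Prop := ∀ i, x i = -1 ∨ x i = 1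

/-- `z` has minimal period `p` under `f`. -/
def minPeriod {α : Type} (f : α → α) (z : α) (p : ℕ) : Prop :=
  0 < p ∧ f^[p] z = z ∧ ∀ q : ℕ, 0 < q → f^[q] z = z → p ≤ q

/-- The all-`(-1)` endpoint `x_-`. -/
def xminus (N : ℕ) : ZMod N → ℤ := fun _ => -1

/-- The all-`(+1)` endpoint `x_+`. -/
def xplus (N : ℕ) : ZMod N → ℤ := fun _ => 1

/-- `f_{σ,w}` has a globally stable binary periodic orbit (GBPO) of period `p`:
there is a binary point `z` (other than the two endpoints) of minimal period `p`
such that every binary point other than the two endpoints eventually lands on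
the orbit `{z, f z, ..., f^{p-1} z}`. -/
def hasGBPO (N : ℕ) (w : ℤ × ℤ × ℤ) (σ : Equiv.Perm (ZMod N)) (p : ℕ) : Prop :=
  ∃ z : ZMod N → ℤ, isB z ∧ z ≠ xminus N ∧ z ≠ xplus N ∧
    minPeriod (pbnn N w σ) z p ∧
    ∀ x : ZMod N → ℤ, isB x → x ≠ xminus N → x ≠ xplus N →
      ∃ k : ℕ, ∃ j < p, (pbnn N w σ)^[k] x = (pbnn N w σ)^[j] z

/-- The cyclic shift `c : i ↦ i + 1` on `ZMod N`. -/
def cShift (N : ℕ) : Equiv.Perm (ZMod N) := Equiv.addRight 1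

/-- Equivalence of permutation IDs under the conjugation action of the cyclic
group generated by `c`: `σ ~ τ` iff `τ = c^k ∘ σ ∘ c^{-k}` for some `k : ℤ`. -/
def shiftSetoid (N : ℕ) : Setoid (Equiv.Perm (ZMod N)) where
  r σ τ := ∃ k : ℤ, cShift N ^ k * σ * (cShift N ^ k)⁻¹ = τ
  iseqv := by
    refine ⟨fun σ => ⟨0, by simp⟩, ?_, ?_⟩
    · rintro σ τ ⟨k, rfl⟩; exact ⟨-k, by group⟩
    · rintro σ τ ρ ⟨k, rfl⟩ ⟨l, rfl⟩; exact ⟨l + k, by group⟩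

/-!
Burnside's lemma for the group `⟨c⟩` of prime order `p` acting by conjugation: the identity
fixes all `p!` permutations, while every other element generates `⟨c⟩` and so fixes exactly the
centralizer of `c`, which consists of the `p` translations `x ↦ x + k`. Hence
`p * #orbits = p! + (p - 1) * p`.
-/

open MulAction Subgroup

section PrimeOrderAction

variable {G X : Type*} [Group G] [MulAction G X]

theorem fixedBy_eq_fixedPoints_of_zpowers_eq_top {g : G} (hg : zpowers g = ⊤) :
    fixedBy X g = fixedPoints G X := by
  ext x
  refine ⟨fun hx h => ?_, fun hx => hx g⟩
  obtain ⟨k, rfl⟩ := mem_zpowers_iff.mp (hg ▸ mem_top h)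
  exact fixedBy_subset_fixedBy_zpow X g k hx

theorem card_orbits_mul_eq_of_prime_card [Finite X] {p : ℕ} [Fact p.Prime]
    (hG : Nat.card G = p) :
    Nat.card (orbitRel.Quotient G X) * p = Nat.card X + (p - 1) * Nat.card (fixedPoints G X) := by
  classical
  have : Finite G := Nat.finite_of_card_ne_zero (hG ▸ (Fact.out : p.Prime).ne_zero)
  have := Fintype.ofFinite G
  have := Fintype.ofFinite X
  have := Fintype.ofFinite (orbitRel.Quotient G X)
  have hfix (g : G) (hg : g ≠ 1) : Nat.card (fixedBy X g) = Nat.card (fixedPoints G X) := by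
    rw [fixedBy_eq_fixedPoints_of_zpowers_eq_top (zpowers_eq_top_of_prime_card hG hg)]
  have burnside := sum_card_fixedBy_eq_card_orbits_mul_card_group G X
  simp only [← Nat.card_eq_fintype_card, hG] at burnside
  rw [← burnside, ← Finset.add_sum_erase _ _ (Finset.mem_univ 1), fixedBy_one_eq_univ,
    Finset.sum_congr rfl fun g hg => hfix g (Finset.ne_of_mem_erase hg), Finset.sum_const,
    Finset.card_erase_of_mem (Finset.mem_univ 1), Finset.card_univ, ← Nat.card_eq_fintype_card,
    hG, Nat.card_univ, smul_eq_mul]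

end PrimeOrderAction

section ShiftConjugation

variable (N : ℕ)

theorem cShift_pow (n : ℕ) : cShift N ^ n = Equiv.addRight (n : ZMod N) := by
  rw [cShift, Equiv.nsmul_addRight, nsmul_one]

theorem orderOf_cShift : orderOf (cShift N) = N := by
  refine Nat.dvd_antisymm ?_ ?_
  · rw [orderOf_dvd_iff_pow_eq_one, cShift_pow, ZMod.natCast_self, Equiv.addRight_zero]
  · have h := congrArg (· 0) (pow_orderOf_eq_one (cShift N))
    simp only [cShift_pow, Equiv.coe_addRight, zero_add, Equiv.Perm.coe_one, id] at h
    exact (ZMod.natCast_eq_zero_iff _ _).mp h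

variable {N} in
theorem commute_cShift_iff {σ : Equiv.Perm (ZMod N)} :
    Commute (cShift N) σ ↔ σ = Equiv.addRight (σ 0) := by
  refine ⟨fun h => ?_, fun h => ?_⟩
  · have hstep : ∀ x, σ (x + 1) = σ x + 1 := fun x => (congrArg (· x) h).symm
    have hint : ∀ k : ℤ, σ k = σ 0 + k := fun k => by
      induction k using Int.induction_on with
      | zero => simp
      | succ k ih => rw [Int.cast_add, Int.cast_one, hstep, ih, add_assoc]
      | pred k ih =>
        rw [← add_left_inj 1, ← hstep, Int.cast_sub, Int.cast_one, sub_add_cancel, ih]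
        ring
    ext x
    obtain ⟨k, rfl⟩ := ZMod.intCast_surjective x
    rw [hint, Equiv.coe_addRight, add_comm]
  · rw [h]
    exact Equiv.ext fun x => add_right_comm x _ _

abbrev shiftGroup : Subgroup (ConjAct (Equiv.Perm (ZMod N))) :=
  zpowers (ConjAct.toConjAct (cShift N))

theorem shiftSetoid_eq_orbitRel :
    shiftSetoid N = orbitRel (shiftGroup N) (Equiv.Perm (ZMod N)) := by
  ext σ τ
  rw [Setoid.comm', orbitRel_apply, mem_orbit_iff, Subtype.exists]
  simp only [mem_zpowers_iff, exists_prop, exists_exists_eq_and, Subgroup.mk_smul, ConjAct.smul_def,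
    ← map_zpow, ConjAct.ofConjAct_toConjAct]
  rfl

theorem nat_card_shiftGroup : Nat.card (shiftGroup N) = N := by
  rw [Nat.card_zpowers, MulEquiv.orderOf_eq, orderOf_cShift]

theorem mem_fixedPoints_shiftGroup_iff {σ : Equiv.Perm (ZMod N)} :
    σ ∈ fixedPoints (shiftGroup N) (Equiv.Perm (ZMod N)) ↔ Commute (cShift N) σ := by
  rw [commute_iff_eq, ← mul_inv_eq_iff_eq_mul]
  refine ⟨fun h => h ⟨_, mem_zpowers _⟩, fun h ⟨g, hg⟩ => ?_⟩
  obtain ⟨k, rfl⟩ := mem_zpowers_iff.mp hg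
  exact fixedBy_subset_fixedBy_zpow (Equiv.Perm (ZMod N)) (ConjAct.toConjAct (cShift N)) k h

theorem fixedPoints_shiftGroup :
    fixedPoints (shiftGroup N) (Equiv.Perm (ZMod N)) = Set.range Equiv.addRight := by
  ext σ
  rw [mem_fixedPoints_shiftGroup_iff, commute_cShift_iff]
  exact ⟨fun h => ⟨_, h.symm⟩, fun ⟨k, hk⟩ => hk ▸ by simp⟩

theorem nat_card_fixedPoints_shiftGroup :
    Nat.card (fixedPoints (shiftGroup N) (Equiv.Perm (ZMod N))) = N := by
  rw [fixedPoints_shiftGroup, Nat.card_range_of_injective, Nat.card_zmod]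
  intro a b h
  simpa using congrArg (· 0) h

end ShiftConjugation

theorem stmt0_general (p : ℕ) (hp : p.Prime) :
    Nat.card (Quotient (shiftSetoid p)) = (p - 1).factorial + p - 1 := by
  have := Fact.mk hp
  have key := card_orbits_mul_eq_of_prime_card (X := Equiv.Perm (ZMod p)) (nat_card_shiftGroup p)
  rw [nat_card_fixedPoints_shiftGroup, Nat.card_perm, Nat.card_zmod] at key
  rw [shiftSetoid_eq_orbitRel]
  apply Nat.eq_of_mul_eq_mul_right hp.pos
  obtain ⟨q, rfl⟩ := Nat.exists_eq_add_one_of_ne_zero hp.ne_zero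
  rw [key, Nat.add_sub_cancel, Nat.factorial_succ, ← add_assoc, Nat.add_sub_cancel]
  ring

/-- The number of orbits of the conjugation action of the cyclic group
generated by `c : i ↦ i + 1` on the permutations of `ZMod p` is
`(p - 1)! + p - 1` for a prime `p ≥ 3`. -/
theorem stmt0 (p : ℕ) (hp : p.Prime) (h3 : 3 ≤ p) :
    Nat.card (Quotient (shiftSetoid p)) = (p - 1).factorial + p - 1 :=
  stmt0_general p hp
end

section
/- Fix N ≥ 3 and integer weights (w_a, w_b, w_c). Define the reversal map ρ : B^{ZMod N} → B^{ZMod N} by ρ(x)_i = x_{-i}. Then the hidden-layer maps satisfy h_{(w_a,w_b,w_c)} ∘ ρ = ρ ∘ h_{(w_c,w_b,w_a)}. In particular, the hidden-layer dynamics with weight triple (w_a, w_b, w_c) is conjugate via the index reversal to the dynamics with the reversed weight triple (w_c, w_b, w_a); this is why connection number CN1 = (-1,-1,+1) is equivalent to CN4 = (+1,-1,-1), and CN3 = (-1,+1,+1) is equivalent to CN6 = (+1,+1,-1). -/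
/-- Index reversal `ρ(x)_i = x_{-i}`. -/
def rev (N : ℕ) (x : ZMod N → ℤ) : ZMod N → ℤ := fun i => x (-i)

lemma hmap_rev (N : ℕ) (wa wb wc : ℤ) :
    hmap N (wa, wb, wc) ∘ rev N = rev N ∘ hmap N (wc, wb, wa) := by
  funext x i
  simp only [Function.comp, hmap, rev]
  have h1 : -(i - 1) = -i + 1 := by ring
  have h2 : -(i + 1) = -i - 1 := by ring
  rw [h1, h2]
  ring_nf

/-- The hidden-layer maps satisfy `h_{(w_a,w_b,w_c)} ∘ ρ = ρ ∘ h_{(w_c,w_b,w_a)}`,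
so the dynamics for a weight triple is conjugate via index reversal to the
dynamics of the reversed triple; in particular CN1 = (-1,-1,1) is equivalent to
CN4 = (1,-1,-1) and CN3 = (-1,1,1) is equivalent to CN6 = (1,1,-1). -/
theorem stmt4 (N : ℕ) (hN : 3 ≤ N) (wa wb wc : ℤ) :
    hmap N (wa, wb, wc) ∘ rev N = rev N ∘ hmap N (wc, wb, wa) ∧
    hmap N (-1, -1, 1) ∘ rev N = rev N ∘ hmap N (1, -1, -1) ∧
    hmap N (-1, 1, 1) ∘ rev N = rev N ∘ hmap N (1, 1, -1) := by
  exact ⟨hmap_rev N wa wb wc, hmap_rev N (-1) (-1) 1, hmap_rev N (-1) 1 1⟩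
end

section
/- Let N = 7, w = CN1 = (-1, -1, 1), and σ the identity permutation of ZMod 7. Then the PBNN map f_{σ,w} has a periodic point of minimal period 14, and every periodic point of f_{σ,w} has minimal period at most 14 (i.e., the basic period of CN1 is 14). -/
set_option maxRecDepth 1000000
set_option maxHeartbeats 10000000

/-- bit value as ±1 -/
def bitI (n : ℕ) (i : ℕ) : ℤ := if n.testBit i then 1 else -1

/-- transition on bitmask encodings of binary states -/
def nextN (n : ℕ) : ℕ :=
  (Finset.range 7).sum fun i =>
    if 0 ≤ -bitI n ((i+6)%7) - bitI n i + bitI n ((i+1)%7) then 2^i else 0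

def stepF (n : Fin 128) : Fin 128 := ⟨nextN n.val % 128, Nat.mod_lt _ (by norm_num)⟩

/-- decode a bitmask into a binary state vector -/
def dec (n : Fin 128) : ZMod 7 → ℤ := fun i => if n.val.testBit i.val then 1 else -1

lemma isB_dec (n : Fin 128) : isB (dec n) := by
  intro i; unfold dec; split
  · right; rfl
  · left; rfl

lemma encBound (v : ZMod 7 → Bool) :
    (Finset.range 7).sum (fun i => if v (i : ZMod 7) then 2^i else 0) < 128 := by
  have hle : (Finset.range 7).sum (fun i => if v (i : ZMod 7) then 2^i else 0)
      ≤ (Finset.range 7).sum (fun i => 2^i) := by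
    apply Finset.sum_le_sum
    intro i _
    split <;> simp
  have : (Finset.range 7).sum (fun i => 2^i) = 127 := by
    simp [Finset.sum_range_succ]
  omega

lemma dec_surj {x : ZMod 7 → ℤ} (hx : isB x) : ∃ n, x = dec n := by
  have key : ∀ v : ZMod 7 → Bool,
      (fun i => if v i then (1:ℤ) else -1) =
        dec ⟨(Finset.range 7).sum (fun i => if v (i : ZMod 7) then 2^i else 0),
          encBound v⟩ := by
    decide
  set v : ZMod 7 → Bool := fun i => decide (x i = 1) with hv
  have hx' : x = fun i => if v i then (1:ℤ) else -1 := by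
    funext i
    rcases hx i with h | h <;> simp [hv, h]
  exact ⟨_, by rw [hx', key v]⟩

lemma sim : ∀ n : Fin 128, pbnn 7 (-1, -1, 1) 1 (dec n) = dec (stepF n) := by decide

lemma iter_sim : ∀ (k : ℕ) (n : Fin 128),
    (pbnn 7 (-1, -1, 1) 1)^[k] (dec n) = dec (stepF^[k] n) := by
  intro k
  induction k with
  | zero => intro n; rfl
  | succ m ih =>
      intro n
      rw [Function.iterate_succ_apply', Function.iterate_succ_apply', ih, sim]

lemma dec_inj : ∀ a b : Fin 128, dec a = dec b → a = b := by decide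

lemma eventual : ∀ m : Fin 128, stepF^[14] (stepF (stepF m)) = stepF (stepF m) := by decide

lemma z0_per : stepF^[14] (124 : Fin 128) = 124 := by decide

lemma z0_min : ∀ q < 14, 0 < q → stepF^[q] (124 : Fin 128) ≠ 124 := by decide

/-- For `N = 7`, CN1 = (-1,-1,1) and the identity permutation, the PBNN map has
a periodic point of minimal period `14`, and every (binary) periodic point has
minimal period at most `14`: the basic period of CN1 is `14`. -/
theorem stmt7 :
    (∃ z : ZMod 7 → ℤ, isB z ∧ minPeriod (pbnn 7 (-1, -1, 1) 1) z 14) ∧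
    (∀ z : ZMod 7 → ℤ, isB z → ∀ p : ℕ,
      minPeriod (pbnn 7 (-1, -1, 1) 1) z p → p ≤ 14) := by
  constructor
  · refine ⟨dec 124, isB_dec _, by norm_num, ?_, fun q hq hqz => ?_⟩
    · rw [iter_sim, z0_per]
    · by_contra h
      push_neg at h
      exact z0_min q h hq (dec_inj _ _ (by rw [← iter_sim]; exact hqz))
  · intro z hz p hp
    obtain ⟨n, rfl⟩ := dec_surj hz
    obtain ⟨hp0, hpz, hmin⟩ := hp
    set f := pbnn 7 (-1, -1, 1) 1 with hf
    have h2p : f^[2 * p] (dec n) = dec n := by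
      rw [two_mul, Function.iterate_add_apply, hpz, hpz]
    have h2 : f^[2] (f^[2 * p - 2] (dec n)) = dec n := by
      rw [← Function.iterate_add_apply, (by omega : 2 + (2 * p - 2) = 2 * p), h2p]
    have h14 : f^[14] (dec n) = dec n := by
      calc f^[14] (dec n) = f^[14] (f^[2] (f^[2 * p - 2] (dec n))) := by rw [h2]
        _ = f^[14] (f^[2] (dec (stepF^[2 * p - 2] n))) := by
              rw [iter_sim (2 * p - 2) n]
        _ = f^[14] (dec (stepF^[2] (stepF^[2 * p - 2] n))) := by
              rw [iter_sim 2]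
        _ = dec (stepF^[14] (stepF^[2] (stepF^[2 * p - 2] n))) := by
              rw [iter_sim 14]
        _ = dec (stepF^[2] (stepF^[2 * p - 2] n)) := by
              rw [show stepF^[2] (stepF^[2 * p - 2] n)
                    = stepF (stepF (stepF^[2 * p - 2] n)) from rfl, eventual]
        _ = f^[2] (f^[2 * p - 2] (dec n)) := by
              rw [iter_sim (2 * p - 2) n, iter_sim 2]
        _ = dec n := h2
    exact hmin 14 (by norm_num) h14
end

section
/- Let N = 7 and w = CN1 = (-1, -1, 1), and let σ be the permutation of {1,...,7} with permutation ID P(2613754), i.e., σ(1)=2, σ(2)=6, σ(3)=1, σ(4)=3, σ(5)=7, σ(6)=5, σ(7)=4 (identified with a permutation of ZMod 7 via i ↦ i-1). Then the PBNN map f_{σ,w} has a globally stable binary periodic orbit of period 20. -/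
def perm2613754Fun : ZMod 7 → ZMod 7 := fun i =>
  if i = 0 then 1 else if i = 1 then 5 else if i = 2 then 0 else if i = 3 then 2 else if i = 4 then 6 else if i = 5 then 4 else 3

noncomputable def perm2613754 : Equiv.Perm (ZMod 7) :=
  Equiv.ofBijective perm2613754Fun (by decide)

/-!
Encoding `1` as `true` and `-1` as `false` conjugates the network to a map on the 128 Boolean
states of length 7. There the 20-cycle is checked step by step, and global stability follows
because the distance to the cycle, tabulated once and for all, strictly decreases along every
non-constant state off the cycle; all finite checks are carried out by kernel evaluation.
-/

open Function

theorem exists_iterate_mem_of_rank_lt {α : Type*} {f : α → α} {P : α → Prop} {S : Set α}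
    (r : α → ℕ) (h : ∀ x, P x → x ∉ S → P (f x) ∧ r (f x) < r x) (x : α) (hx : P x) :
    ∃ k, f^[k] x ∈ S := by
  induction hr : r x using Nat.strong_induction_on generalizing x with
  | _ n ih =>
    by_cases hS : x ∈ S
    · exact ⟨0, hS⟩
    · obtain ⟨hfx, hlt⟩ := h x hx hS
      obtain ⟨k, hk⟩ := ih _ (hr ▸ hlt) (f x) hfx rfl
      exact ⟨k + 1, hk⟩

section Cycle

variable {α : Type} {f : α → α} {p : ℕ} {c : ZMod p → α}

theorem iterate_apply_of_cycle (hc : ∀ j, f (c j) = c (j + 1)) (k : ℕ) (j : ZMod p) :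
    f^[k] (c j) = c (j + k) := by
  induction k with
  | zero => simp
  | succ k ih => rw [iterate_succ_apply', ih, hc, Nat.cast_succ, add_assoc]

theorem minPeriod_of_cycle [NeZero p] (hc : ∀ j, f (c j) = c (j + 1)) (hinj : Injective c) :
    minPeriod f (c 0) p := by
  refine ⟨Nat.pos_of_neZero p, ?_, fun q hq hfix => ?_⟩
  · rw [iterate_apply_of_cycle hc, ZMod.natCast_self, add_zero]
  · rw [iterate_apply_of_cycle hc, zero_add] at hfix
    exact Nat.le_of_dvd hq ((ZMod.natCast_eq_zero_iff q p).1 (hinj hfix))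

end Cycle

theorem hasGBPO_of_cycle {N p : ℕ} [NeZero p] {w : ℤ × ℤ × ℤ} {σ : Equiv.Perm (ZMod N)}
    (c : ZMod p → ZMod N → ℤ) (hc : ∀ j, pbnn N w σ (c j) = c (j + 1)) (hinj : Injective c)
    (hB : isB (c 0)) (hm : c 0 ≠ xminus N) (hp : c 0 ≠ xplus N)
    (hreach : ∀ x, isB x → x ≠ xminus N → x ≠ xplus N → ∃ k, (pbnn N w σ)^[k] x ∈ Set.range c) :
    hasGBPO N w σ p := by
  refine ⟨c 0, hB, hm, hp, minPeriod_of_cycle hc hinj, fun x hx hxm hxp => ?_⟩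
  obtain ⟨k, j, hj⟩ := hreach x hx hxm hxp
  refine ⟨k, j.val, ZMod.val_lt j, ?_⟩
  rw [← hj, iterate_apply_of_cycle hc, zero_add, ZMod.natCast_zmod_val]

section Binary

variable {N : ℕ}

def boolSign (b : Bool) : ℤ := if b then 1 else -1

def signVec (v : ZMod N → Bool) : ZMod N → ℤ := fun i => boolSign (v i)

def boolStep (N : ℕ) (w : ℤ × ℤ × ℤ) (σ : Equiv.Perm (ZMod N)) (v : ZMod N → Bool) :
    ZMod N → Bool := fun i =>
  decide (0 ≤ w.1 * boolSign (v (σ i - 1)) + w.2.1 * boolSign (v (σ i)) +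
    w.2.2 * boolSign (v (σ i + 1)))

theorem sg_eq_boolSign (u : ℤ) : sg u = boolSign (decide (0 ≤ u)) := by
  by_cases h : 0 ≤ u <;> simp [sg, boolSign, h]

theorem boolSign_injective : Injective boolSign := by
  decide

theorem signVec_injective : Injective (signVec (N := N)) :=
  fun _ _ h => funext fun i => boolSign_injective (congrFun h i)

theorem isB_signVec (v : ZMod N → Bool) : isB (signVec v) := fun i => by
  cases v i <;> simp [signVec, boolSign]

theorem isB.exists_signVec_eq {x : ZMod N → ℤ} (hx : isB x) : ∃ v, signVec v = x :=
  ⟨fun i => decide (x i = 1), funext fun i => by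
    rcases hx i with h | h <;> simp [signVec, boolSign, h]⟩

theorem signVec_eq_xminus_iff {v : ZMod N → Bool} : signVec v = xminus N ↔ v = fun _ => false :=
  signVec_injective.eq_iff' rfl

theorem signVec_eq_xplus_iff {v : ZMod N → Bool} : signVec v = xplus N ↔ v = fun _ => true :=
  signVec_injective.eq_iff' rfl

theorem semiconj_signVec_boolStep (w : ℤ × ℤ × ℤ) (σ : Equiv.Perm (ZMod N)) :
    Semiconj signVec (boolStep N w σ) (pbnn N w σ) := fun v => funext fun i => by
  simp only [signVec, boolStep, pbnn, hmap, sg_eq_boolSign]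

theorem hasGBPO_of_boolCycle {p : ℕ} [NeZero p] {w : ℤ × ℤ × ℤ} {σ : Equiv.Perm (ZMod N)}
    (c : ZMod p → ZMod N → Bool) (hc : ∀ j, boolStep N w σ (c j) = c (j + 1))
    (hinj : Injective c) (hfalse : c 0 ≠ fun _ => false) (htrue : c 0 ≠ fun _ => true)
    (hreach : ∀ v, (v ≠ fun _ => false) → (v ≠ fun _ => true) →
      ∃ k, (boolStep N w σ)^[k] v ∈ Set.range c) :
    hasGBPO N w σ p := by
  have hconj := semiconj_signVec_boolStep w σ
  refine hasGBPO_of_cycle (signVec ∘ c) (fun j => ?_) (signVec_injective.comp hinj)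
    (isB_signVec _) (mt signVec_eq_xminus_iff.1 hfalse) (mt signVec_eq_xplus_iff.1 htrue)
    fun x hx hxm hxp => ?_
  · rw [comp_apply, comp_apply, ← hconj, hc]
  · obtain ⟨v, rfl⟩ := hx.exists_signVec_eq
    obtain ⟨k, j, hj⟩ := hreach v (mt signVec_eq_xminus_iff.2 hxm) (mt signVec_eq_xplus_iff.2 hxp)
    exact ⟨k, j, by rw [← (hconj.iterate_right k) v, comp_apply, hj]⟩

end Binary

def cycle20 : ZMod 20 → ZMod 7 → Bool :=
  ![![true, true, true, false, false, false, false],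
    ![false, true, true, false, true, true, false],
    ![true, false, true, false, false, true, true],
    ![true, true, false, false, false, true, false],
    ![false, false, true, false, true, true, true],
    ![true, false, false, false, false, true, true],
    ![false, true, false, true, false, true, true],
    ![false, true, true, true, false, true, false],
    ![true, false, true, false, false, true, false],
    ![true, false, false, false, true, true, false],
    ![false, false, false, true, true, true, true],
    ![true, false, false, true, false, false, true],
    ![false, true, false, true, true, false, false],
    ![false, false, true, true, true, false, true],
    ![true, true, false, true, false, false, false],
    ![false, true, true, true, true, false, false],
    ![true, false, true, false, true, false, false],
    ![true, false, false, false, true, false, true],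
    ![false, true, false, true, true, false, true],
    ![false, true, true, true, false, false, true]]

def binaryCode (v : ZMod 7 → Bool) : ℕ :=
  ∑ i, if v i then 2 ^ i.val else 0

/-- Number of steps of `boolStep 7 (-1, -1, 1) perm2613754` that `v` needs to reach `cycle20`,
tabulated at `binaryCode v`. -/
def depth (v : ZMod 7 → Bool) : ℕ :=
  [0, 3, 2, 2, 2, 2, 2, 0, 9, 1, 1, 0, 9, 2, 6, 8, 3, 3, 5, 5, 7, 0, 7, 5, 3, 3, 0, 1, 5, 4, 0,
    8, 6, 1, 2, 0, 1, 0, 1, 2, 5, 4, 6, 4, 5, 4, 0, 2, 6, 0, 2, 1, 1, 7, 0, 1, 3, 3, 2, 1, 3, 4,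
    3, 8, 8, 3, 4, 3, 1, 2, 3, 3, 1, 0, 7, 1, 1, 2, 0, 6, 2, 0, 4, 5, 4, 6, 4, 5, 2, 1, 0, 1, 0,
    2, 1, 6, 8, 0, 4, 5, 1, 0, 3, 3, 5, 7, 0, 7, 5, 5, 3, 3, 8, 6, 2, 9, 0, 1, 1, 9, 0, 2, 2, 2,
    2, 2, 3, 0].getD (binaryCode v) 0

set_option maxRecDepth 20000 in
theorem boolStep_cycle20 (j : ZMod 20) :
    boolStep 7 (-1, -1, 1) perm2613754 (cycle20 j) = cycle20 (j + 1) := by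
  revert j
  decide

set_option maxRecDepth 20000 in
theorem cycle20_injective : Injective cycle20 := by
  decide

set_option maxRecDepth 20000 in
theorem depth_boolStep_lt : ∀ v : ZMod 7 → Bool, (v ≠ fun _ => false) ∧ (v ≠ fun _ => true) →
    v ∉ Set.range cycle20 →
    ((boolStep 7 (-1, -1, 1) perm2613754 v ≠ fun _ => false) ∧
      (boolStep 7 (-1, -1, 1) perm2613754 v ≠ fun _ => true)) ∧
    depth (boolStep 7 (-1, -1, 1) perm2613754 v) < depth v := by
  decide

/-- For `N = 7`, CN1 = (-1,-1,1) and permutation ID `P(2613754)`, the PBNN map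
has a globally stable binary periodic orbit of period `20`. -/
theorem stmt8 : hasGBPO 7 (-1, -1, 1) perm2613754 20 :=
  hasGBPO_of_boolCycle cycle20 boolStep_cycle20 cycle20_injective (by decide) (by decide)
    fun v hfalse htrue => exists_iterate_mem_of_rank_lt depth depth_boolStep_lt v ⟨hfalse, htrue⟩
end

section
/- Let N = 7 and w = CN0 = (-1, -1, -1). Then for every permutation σ of ZMod 7, the PBNN map f_{σ,w} does not have a globally stable binary periodic orbit of any period. -/
def x0 : ZMod 7 → ℤ := fun i => if i = 0 then 1 else -1

def Endp (y : ZMod 7 → ℤ) : Prop := y = xminus 7 ∨ y = xplus 7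

lemma f_plus (σ : Equiv.Perm (ZMod 7)) : pbnn 7 (-1,-1,-1) σ (xplus 7) = xminus 7 := by
  funext i; simp [pbnn, hmap, xplus, xminus, sg]

lemma f_minus (σ : Equiv.Perm (ZMod 7)) : pbnn 7 (-1,-1,-1) σ (xminus 7) = xplus 7 := by
  funext i; simp [pbnn, hmap, xplus, xminus, sg]

lemma iter_E (σ : Equiv.Perm (ZMod 7)) (t : ℕ) (y : ZMod 7 → ℤ) (hy : Endp y) :
    Endp ((pbnn 7 (-1,-1,-1) σ)^[t] y) := by
  induction t generalizing y with
  | zero => exact hy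
  | succ n ih =>
    rw [Function.iterate_succ_apply]
    rcases hy with h | h
    · exact ih _ (by rw [h, f_minus]; exact Or.inr rfl)
    · exact ih _ (by rw [h, f_plus]; exact Or.inl rfl)

lemma hmap_x0 : ∀ j : ZMod 7, hmap 7 (-1,-1,-1) x0 j = 1 := by decide

lemma f_x0 (σ : Equiv.Perm (ZMod 7)) : pbnn 7 (-1,-1,-1) σ x0 = xplus 7 := by
  funext i; simp [pbnn, hmap_x0, xplus]

/-- For `N = 7` and CN0 = (-1,-1,-1): no PBNN map has a globally stable binary
periodic orbit of any period. -/
theorem stmt14 :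
    ∀ σ : Equiv.Perm (ZMod 7), ∀ p : ℕ, ¬ hasGBPO 7 (-1, -1, -1) σ p := by
  intro σ p h
  unfold hasGBPO minPeriod at h
  obtain ⟨z, hzB, hzm, hzp, ⟨hp0, hper, -⟩, hglob⟩ := h
  set f := pbnn 7 (-1,-1,-1) σ with hf
  have hx0B : isB x0 := by intro i; unfold x0; split <;> simp
  have hx0m : x0 ≠ xminus 7 := fun h => by simpa [x0, xminus] using congrFun h 0
  have hx0p : x0 ≠ xplus 7 := fun h => by
    simpa [x0, xplus, show (1:ZMod 7) ≠ 0 by decide] using congrFun h 1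
  obtain ⟨k, j, hj, hk⟩ := hglob x0 hx0B hx0m hx0p
  have h1 : f^[j+1] z = f^[k] (f x0) := by
    rw [← Function.iterate_succ_apply f k x0, Function.iterate_succ_apply' f j z, ← hk,
      ← Function.iterate_succ_apply' f k x0, Function.iterate_succ_apply]
  have h2 : Endp (f^[j+1] z) := by
    rw [h1, hf, f_x0 σ]
    exact iter_E σ k _ (Or.inr rfl)
  set m := j + 1 with hm
  have hmp : m ≤ p * m := Nat.le_mul_of_pos_left m hp0
  have hE : Endp (f^[p*m - m] (f^[m] z)) := iter_E σ _ _ h2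
  rw [← Function.iterate_add_apply, Nat.sub_add_cancel hmp] at hE
  have hzper : f^[p*m] z = z := by
    rw [Function.iterate_mul]
    exact Function.iterate_fixed hper m
  rw [hzper] at hE
  rcases hE with h | h
  · exact hzm h
  · exact hzp h
end
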